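/- Let M and N be metric spaces and π : M → N a continuous, closed and surjective map, and let f ∈ C(M,ℝ) be integral over C(N,ℝ) via φ_π and injective on each fiber of π. Then there exists a finite cover M = M₁ ∪ ⋯ ∪ M_r by closed subsets such that each restriction π|_{M_i} is injective; in particular, every element of C(M,ℝ) is integral over C(N,ℝ) via φ_π. -/

import Mathlib

open ContinuousMap

/-- The ring homomorphism `φ_π : C(N, ℝ) →+* C(M, ℝ)`, `f ↦ f ∘ π`, induced by a
continuous map `π : M → N`. -/
noncomputable def phiPi {M N : Type*} [TopologicalSpace M] [TopologicalSpace N]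
    (π : C(M, N)) : C(N, ℝ) →+* C(M, ℝ) :=
  (ContinuousMap.compRightAlgHom ℝ ℝ π).toRingHom

/-! Write `f` as a root of a monic `p` over `C(N, ℝ)`. For `x ∈ M`, `f x` is a root of the
complex polynomial `p(π x)`, whose `n` roots we order by real part; let `M_k` be the set of `x`
for which `f x` can be the `(k+1)`-st. Points of one fiber in the same `M_k` have equal
`f`-values, hence coincide. Each `M_k` is closed because the roots of a monic polynomial depend
continuously on its coefficients, so at a limit point at least as many roots lie weakly on each
side of `f x`. Finally, `π` embeds each `M_k` as a closed subset of `N`, so Tietze extends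
`g|_{M_k}` to `G_k ∈ C(N, ℝ)` and `g` is a root of `∏ k, (X - G_k ∘ π)`. -/

open Polynomial Filter Topology

theorem Multiset.exists_fin_map_univ_eq {α : Type*} (s : Multiset α) :
    ∃ z : Fin (Multiset.card s) → α, Finset.univ.val.map z = s := by
  induction s using Quotient.inductionOn with | h l => ?_
  refine ⟨fun i => l.get (i.cast (Multiset.coe_card l)), ?_⟩
  rw [Fin.univ_val_map]
  exact congrArg _ (List.ext_get (by simp) fun i _ _ => by simp)

theorem Multiset.card_filter_add_card_filter_le {α : Type*} {p q : α → Prop} [DecidablePred p]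
    [DecidablePred q] (s : Multiset α) (h : ∀ a ∈ s, p a → ¬q a) :
    Multiset.card (s.filter p) + Multiset.card (s.filter q) ≤ Multiset.card s := by
  have hboth : s.filter (fun a => p a ∧ q a) = 0 :=
    Multiset.filter_eq_nil.mpr fun a ha hpq => h a ha hpq.1 hpq.2
  rw [← Multiset.card_add, Multiset.filter_add_filter, hboth, add_zero]
  exact Multiset.card_le_card (Multiset.filter_le _ _)

namespace Polynomial

theorem tendsto_eval_of_tendsto_coeff {R ι : Type*} [CommSemiring R] [TopologicalSpace R]
    [IsTopologicalSemiring R] {l : Filter ι} {q : ι → R[X]} {Q : R[X]} {n : ℕ}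
    (hq : ∀ j, (q j).natDegree ≤ n) (hQ : Q.natDegree ≤ n)
    (hcoeff : ∀ i, Tendsto (fun j => (q j).coeff i) l (𝓝 (Q.coeff i))) (t : R) :
    Tendsto (fun j => (q j).eval t) l (𝓝 (Q.eval t)) := by
  simp only [eval_eq_sum_range' (Nat.lt_succ_of_le (hq _)),
    eval_eq_sum_range' (Nat.lt_succ_of_le hQ)]
  exact tendsto_finsetSum _ fun i _ => (hcoeff i).mul_const _

theorem Monic.cauchyBound_le_one_add_sum {q : ℂ[X]} (hq : q.Monic) :
    (q.cauchyBound : ℝ) ≤ 1 + ∑ i ∈ Finset.range q.natDegree, ‖q.coeff i‖ := by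
  have hsup : (Finset.range q.natDegree).sup (‖q.coeff ·‖₊) ≤
      ∑ i ∈ Finset.range q.natDegree, ‖q.coeff i‖₊ :=
    Finset.sup_le fun _ hi =>
      Finset.single_le_sum (f := (‖q.coeff ·‖₊)) (fun _ _ => zero_le) hi
  have := NNReal.coe_le_coe.mpr hsup
  simp only [cauchyBound, hq.leadingCoeff, nnnorm_one, div_one, NNReal.coe_add, NNReal.coe_one,
    NNReal.coe_sum, coe_nnnorm] at this ⊢
  linarith

theorem roots_prod_X_sub_C_univ {R ι : Type*} [CommRing R] [IsDomain R] [Fintype ι]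
    (w : ι → R) : (∏ i, (X - C (w i))).roots = Finset.univ.val.map w := by
  conv_rhs => rw [← roots_multiset_prod_X_sub_C (Finset.univ.val.map w), Multiset.map_map]
  rfl

theorem Monic.eq_prod_X_sub_C_of_map_eq_roots {ι : Type*} [Fintype ι] {q : ℂ[X]}
    (hq : q.Monic) {z : ι → ℂ} (hz : Finset.univ.val.map z = q.roots) :
    q = ∏ i, (X - C (z i)) := by
  conv_lhs => rw [← prod_multiset_X_sub_C_of_monic_of_roots_card_eq hq
    IsAlgClosed.card_roots_eq_natDegree, ← hz, Multiset.map_map]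
  rfl

theorem exists_subseq_tendsto_roots {n : ℕ} {q : ℕ → ℂ[X]} {Q : ℂ[X]}
    (hq : ∀ j, (q j).Monic) (hqn : ∀ j, (q j).natDegree = n) (hQ : Q.natDegree ≤ n)
    (hcoeff : ∀ i, Tendsto (fun j => (q j).coeff i) atTop (𝓝 (Q.coeff i))) :
    ∃ (z : ℕ → Fin n → ℂ) (w : Fin n → ℂ) (φ : ℕ → ℕ), StrictMono φ ∧
      Tendsto (z ∘ φ) atTop (𝓝 w) ∧ (∀ j, Finset.univ.val.map (z j) = (q j).roots) ∧
      Finset.univ.val.map w = Q.roots := by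
  have hcard : ∀ j, Multiset.card (q j).roots = n :=
    fun j => IsAlgClosed.card_roots_eq_natDegree.trans (hqn j)
  choose z hz using fun j => hcard j ▸ (q j).roots.exists_fin_map_univ_eq
  obtain ⟨B, hB⟩ :
      BddAbove (Set.range fun j => 1 + ∑ i ∈ Finset.range n, ‖(q j).coeff i‖) :=
    (tendsto_const_nhds.add (tendsto_finsetSum _ fun i _ => (hcoeff i).norm)).bddAbove_range
  have hzB : ∀ j, z j ∈ Metric.closedBall 0 B := by
    intro j
    have hB0 : 0 ≤ B := le_trans (by positivity) (hB ⟨j, rfl⟩)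
    rw [mem_closedBall_zero_iff, pi_norm_le_iff_of_nonneg hB0]
    intro i
    have hroot : (q j).IsRoot (z j i) :=
      isRoot_of_mem_roots (hz j ▸ Multiset.mem_map_of_mem _ (Finset.mem_univ i))
    calc ‖z j i‖ ≤ (q j).cauchyBound := (hroot.norm_lt_cauchyBound (hq j).ne_zero).le
      _ ≤ 1 + ∑ i ∈ Finset.range n, ‖(q j).coeff i‖ :=
        hqn j ▸ (hq j).cauchyBound_le_one_add_sum
      _ ≤ B := hB ⟨j, rfl⟩
  obtain ⟨w, -, φ, hφ, hzw⟩ := (isCompact_closedBall 0 B).tendsto_subseq hzB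
  refine ⟨z, w, φ, hφ, hzw, hz, ?_⟩
  suffices hQw : Q = ∏ i, (X - C (w i)) by rw [hQw, roots_prod_X_sub_C_univ]
  refine funext fun t => tendsto_nhds_unique
    ((tendsto_eval_of_tendsto_coeff (fun j => (hqn j).le) hQ hcoeff t).comp hφ.tendsto_atTop) ?_
  have hqz j : q j = ∏ i, (X - C (z j i)) := (hq j).eq_prod_X_sub_C_of_map_eq_roots (hz j)
  simp only [Function.comp_def, hqz, eval_prod, eval_sub, eval_X, eval_C]
  exact tendsto_finsetProd _ fun i _ =>
    tendsto_const_nhds.sub (((continuous_apply i).tendsto w).comp hzw)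

theorem card_filter_roots_le_of_tendsto {T : Type*} [TopologicalSpace T] {R : ℂ → T → Prop}
    [∀ z t, Decidable (R z t)] (hR : IsClosed {p : ℂ × T | R p.1 p.2})
    {n : ℕ} {q : ℕ → ℂ[X]} {Q : ℂ[X]}
    (hq : ∀ j, (q j).Monic) (hqn : ∀ j, (q j).natDegree = n) (hQ : Q.natDegree ≤ n)
    (hcoeff : ∀ i, Tendsto (fun j => (q j).coeff i) atTop (𝓝 (Q.coeff i)))
    {c : ℕ → T} {c₀ : T} (hc : Tendsto c atTop (𝓝 c₀)) {k : ℕ}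
    (hk : ∀ j, k ≤ Multiset.card ((q j).roots.filter fun z => R z (c j))) :
    k ≤ Multiset.card (Q.roots.filter fun z => R z c₀) := by
  obtain ⟨z, w, φ, hφ, hzw, hz, hw⟩ := exists_subseq_tendsto_roots hq hqn hQ hcoeff
  have hfar : ∀ᶠ j in atTop, ∀ i, ¬R (w i) c₀ → ¬R (z (φ j) i) (c (φ j)) := by
    refine eventually_all.mpr fun i => ?_
    by_cases hi : R (w i) c₀
    · exact .of_forall fun _ h => (h hi).elim
    · have hlim : Tendsto (fun j => (z (φ j) i, c (φ j))) atTop (𝓝 (w i, c₀)) :=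
        (((continuous_apply i).tendsto w).comp hzw).prodMk_nhds (hc.comp hφ.tendsto_atTop)
      exact (hlim.eventually (hR.isOpen_compl.mem_nhds hi)).mono fun _ h _ => h
  obtain ⟨j, hj⟩ := hfar.exists
  have hkj := hk (φ j)
  rw [← hz, Multiset.filter_map, Multiset.card_map] at hkj
  rw [← hw, Multiset.filter_map, Multiset.card_map]
  refine hkj.trans (Multiset.card_le_card (Multiset.monotone_filter_right _ fun i hi => ?_))
  by_contra h
  exact hj i h hi

end Polynomial

-- `x` lies in the `k`-th piece when `g x` can be the `(k+1)`-st of the `n` roots of `P x`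
-- ordered by real part.
def rootRankPiece {M : Type*} (P : M → ℂ[X]) (g : M → ℝ) (n k : ℕ) : Set M :=
  {x | k + 1 ≤ Multiset.card ((P x).roots.filter fun z => z.re ≤ g x) ∧
    n - k ≤ Multiset.card ((P x).roots.filter fun z => g x ≤ z.re)}

section rootRankPiece

variable {M : Type*} {P : M → ℂ[X]} {g : M → ℝ} {n : ℕ}

theorem exists_mem_rootRankPiece {x : M} (hn : (P x).natDegree = n)
    (hroot : (g x : ℂ) ∈ (P x).roots) : ∃ k : Fin n, x ∈ rootRankPiece P g n k := by
  set a := Multiset.card ((P x).roots.filter fun z => z.re ≤ g x)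
  set b := Multiset.card ((P x).roots.filter fun z => g x ≤ z.re)
  have hcard : Multiset.card (P x).roots = n := IsAlgClosed.card_roots_eq_natDegree.trans hn
  have ha : 1 ≤ a := Multiset.card_pos_iff_exists_mem.mpr
    ⟨_, Multiset.mem_filter.mpr ⟨hroot, by simp⟩⟩
  have han : a ≤ n := hcard ▸ Multiset.card_le_card (Multiset.filter_le _ _)
  have hab : n + 1 ≤ a + b := by
    have htie : 1 ≤ Multiset.card ((P x).roots.filter fun z => z.re ≤ g x ∧ g x ≤ z.re) :=
      Multiset.card_pos_iff_exists_mem.mpr ⟨_, Multiset.mem_filter.mpr ⟨hroot, by simp⟩⟩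
    have hsplit : a + b = n + Multiset.card
        ((P x).roots.filter fun z => z.re ≤ g x ∧ g x ≤ z.re) := by
      rw [← Multiset.card_add, Multiset.filter_add_filter, Multiset.card_add,
        Multiset.filter_eq_self.mpr fun z _ => le_total _ _, hcard]
    omega
  refine ⟨⟨a - 1, by omega⟩, ?_, ?_⟩ <;> dsimp only <;> omega

theorem le_of_mem_rootRankPiece {k : ℕ} {x x' : M} (hx : x ∈ rootRankPiece P g n k)
    (hx' : x' ∈ rootRankPiece P g n k) (hP : P x = P x') (hn : (P x').natDegree ≤ n) :
    g x ≤ g x' := by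
  by_contra! hlt
  have hdisj := Multiset.card_filter_add_card_filter_le (P x').roots
    (p := fun z => z.re ≤ g x') (q := fun z => g x ≤ z.re) fun z _ h h' => by linarith
  have hroots : Multiset.card (P x').roots ≤ n := (card_roots' _).trans hn
  have hbelow := hx'.1
  have habove : n - k ≤ Multiset.card ((P x').roots.filter fun z => g x ≤ z.re) := hP ▸ hx.2
  have hkn : k + 1 ≤ n :=
    hbelow.trans ((Multiset.card_le_card (Multiset.filter_le _ _)).trans hroots)
  omega

theorem isClosed_rootRankPiece [TopologicalSpace M] [SequentialSpace M]
    (hP : ∀ x, (P x).Monic) (hPn : ∀ x, (P x).natDegree = n)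
    (hPc : ∀ i, Continuous fun x => (P x).coeff i) (hg : Continuous g) (k : ℕ) :
    IsClosed (rootRankPiece P g n k) := by
  refine IsSeqClosed.isClosed fun u a hu hua => ?_
  have hcoeff i := ((hPc i).tendsto a).comp hua
  have hga := (hg.tendsto a).comp hua
  exact ⟨card_filter_roots_le_of_tendsto (R := fun z t => z.re ≤ t)
      (isClosed_le (Complex.continuous_re.comp continuous_fst) continuous_snd)
      (fun j => hP _) (fun j => hPn _) (hPn a).le hcoeff hga fun j => (hu j).1,
    card_filter_roots_le_of_tendsto (R := fun z t => t ≤ z.re)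
      (isClosed_le continuous_snd (Complex.continuous_re.comp continuous_fst))
      (fun j => hP _) (fun j => hPn _) (hPn a).le hcoeff hga fun j => (hu j).2⟩

end rootRankPiece

namespace ContinuousMap

variable {M N : Type*} [TopologicalSpace M] [TopologicalSpace N]

noncomputable def polyAt (p : C(N, ℝ)[X]) (y : N) : ℂ[X] :=
  p.map (Complex.ofRealHom.comp (evalAlgHom ℝ ℝ y).toRingHom)

variable {p : C(N, ℝ)[X]}

theorem coeff_polyAt (y : N) (i : ℕ) : (polyAt p y).coeff i = (p.coeff i y : ℂ) := by
  simp [polyAt, coeff_map]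

theorem continuous_coeff_polyAt (i : ℕ) : Continuous fun y => (polyAt p y).coeff i := by
  simp only [coeff_polyAt]
  fun_prop

theorem monic_polyAt (hp : p.Monic) (y : N) : (polyAt p y).Monic := hp.map _

theorem natDegree_polyAt (hp : p.Monic) (y : N) : (polyAt p y).natDegree = p.natDegree :=
  hp.natDegree_map _

theorem isRoot_polyAt (π : C(M, N)) {f : C(M, ℝ)} (hf : p.eval₂ (phiPi π) f = 0) (x : M) :
    (polyAt p (π x)).IsRoot (f x) := by
  have hev := hom_eval₂ p (phiPi π) (Complex.ofRealHom.comp (evalAlgHom ℝ ℝ x).toRingHom) f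
  rw [hf, map_zero] at hev
  rw [IsRoot, polyAt, eval_map]
  exact hev.symm

theorem exists_comp_eq_on_of_injOn [NormalSpace N] {π : C(M, N)} (hπ : IsClosedMap π)
    {A : Set M} (hA : IsClosed A) (hinj : A.InjOn π) (g : C(M, ℝ)) :
    ∃ G : C(N, ℝ), ∀ x ∈ A, G (π x) = g x := by
  have hemb : IsClosedEmbedding (A.domRestrict π) :=
    .of_continuous_injective_isClosedMap (π.continuous.comp continuous_subtype_val)
      hinj.injective (hπ.comp hA.isClosedMap_subtype_val)
  obtain ⟨G, hG⟩ := exists_extension hemb (g.restrict A)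
  exact ⟨G, fun x hx => DFunLike.congr_fun hG ⟨x, hx⟩⟩

theorem phiPi_isIntegral_of_closed_cover [NormalSpace N] {π : C(M, N)} (hπ : IsClosedMap π)
    {ι : Type*} [Fintype ι] {A : ι → Set M} (hA : ∀ i, IsClosed (A i))
    (hcover : ⋃ i, A i = Set.univ) (hinj : ∀ i, (A i).InjOn π) : (phiPi π).IsIntegral := by
  intro g
  choose G hG using fun i => exists_comp_eq_on_of_injOn hπ (hA i) (hinj i) g
  refine ⟨∏ i, (X - Polynomial.C (G i)),
    monic_prod_of_monic _ _ fun i _ => monic_X_sub_C _, ?_⟩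
  ext x
  obtain ⟨i, hi⟩ := Set.mem_iUnion.mp (hcover.symm ▸ Set.mem_univ x : x ∈ ⋃ i, A i)
  rw [eval₂_finsetProd, ContinuousMap.prod_apply, zero_apply]
  refine Finset.prod_eq_zero (Finset.mem_univ i) ?_
  simp only [eval₂_sub, eval₂_X, eval₂_C, sub_apply]
  exact sub_eq_zero.mpr (hG i x hi).symm

end ContinuousMap

open ContinuousMap in
theorem closed_cover_of_fiber_separating_integral_function_general {M N : Type*} [MetricSpace M]
    [MetricSpace N] (π : C(M, N)) (hclosed : IsClosedMap π)
    (f : C(M, ℝ))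
    (hint : (phiPi π).IsIntegralElem f)
    (hfib : ∀ y : N, Set.InjOn f (⇑π ⁻¹' {y})) :
    (∃ r : ℕ, ∃ Mi : Fin r → Set M, (∀ i, IsClosed (Mi i)) ∧ (⋃ i, Mi i) = Set.univ ∧
        ∀ i, Set.InjOn π (Mi i)) ∧
      (phiPi π).IsIntegral := by
  obtain ⟨p, hp, hpf⟩ := hint
  set P : M → ℂ[X] := fun x => polyAt p (π x)
  set piece : Fin p.natDegree → Set M := fun k => rootRankPiece P f p.natDegree k
  have hclosed_piece k : IsClosed (piece k) :=
    isClosed_rootRankPiece (fun x => monic_polyAt hp _) (fun x => natDegree_polyAt hp _)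
      (fun i => (continuous_coeff_polyAt i).comp π.continuous) f.continuous k
  have hcover : ⋃ k, piece k = Set.univ := Set.iUnion_eq_univ_iff.mpr fun x =>
    exists_mem_rootRankPiece (natDegree_polyAt hp _)
      (mem_roots'.mpr ⟨(monic_polyAt hp _).ne_zero, isRoot_polyAt π hpf x⟩)
  have hinj k : (piece k).InjOn π := fun x hx x' hx' hxx' => by
    have hP : P x = P x' := congrArg (polyAt p) hxx'
    refine hfib (π x') hxx' rfl (le_antisymm ?_ ?_)
    · exact le_of_mem_rootRankPiece hx hx' hP (natDegree_polyAt hp _).le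
    · exact le_of_mem_rootRankPiece hx' hx hP.symm (natDegree_polyAt hp _).le
  exact ⟨⟨_, piece, hclosed_piece, hcover, hinj⟩,
    phiPi_isIntegral_of_closed_cover hclosed hclosed_piece hcover hinj⟩

/-- Let `M, N` be metric spaces, `π : M → N` a continuous, closed and
surjective map, and `f ∈ C(M, ℝ)` integral over `C(N, ℝ)` via `φ_π` and injective on
each fiber of `π`. Then there is a finite cover of `M` by closed subsets on each of
which `π` is injective; in particular every element of `C(M, ℝ)` is integral over
`C(N, ℝ)` via `φ_π`. -/
theorem closed_cover_of_fiber_separating_integral_function {M N : Type*} [MetricSpace M]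
    [MetricSpace N] (π : C(M, N)) (hclosed : IsClosedMap π)
    (hsurj : Function.Surjective π) (f : C(M, ℝ))
    (hint : (phiPi π).IsIntegralElem f)
    (hfib : ∀ y : N, Set.InjOn f (⇑π ⁻¹' {y})) :
    (∃ r : ℕ, ∃ Mi : Fin r → Set M, (∀ i, IsClosed (Mi i)) ∧ (⋃ i, Mi i) = Set.univ ∧
        ∀ i, Set.InjOn π (Mi i)) ∧
      (phiPi π).IsIntegral :=
  closed_cover_of_fiber_separating_integral_function_general π hclosed f hint hfib
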